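/- The breakpoint (Miyano–Hayashi) construction is correct for universal co-Büchi / nondeterministic co-Büchi determinization: given a nondeterministic co-Büchi automaton N, the deterministic automaton D whose states are pairs (S, O) of subsets of N's states (S the subset-construction set, O the 'obligation' set reset at breakpoints), with a Büchi acceptance condition on states with O = ∅, accepts exactly the language of N. -/
import Mathlib


open scoped Classical

/-- The breakpoint (Miyano–Hayashi) run on the word `α`: states are pairs
`(S, O)` of subsets of the states of the nondeterministic co-Büchi automaton
`(Q, A, I, R, Gs)`.  `S` is the usual subset-construction set; `O` tracks the
states whose runs have stayed inside `Gs` since the last breakpoint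
(`O = ∅`), at which point it is reset to `S' ∩ Gs`. -/
noncomputable def bpRun {Q A : Type*} (R : Q → A → Q → Prop)
    (Gs I : Set Q) (α : ℕ → A) : ℕ → Set Q × Set Q
  | 0 => (I, ∅)
  | n + 1 =>
    let p := bpRun R Gs I α n
    let S' : Set Q := {q' | ∃ q ∈ p.1, R q (α n) q'}
    if p.2 = ∅ then (S', S' ∩ Gs)
    else (S', {q' | ∃ q ∈ p.2, R q (α n) q'} ∩ Gs)

section MH
variable {Q A : Type*} (R : Q → A → Q → Prop) (Gs I : Set Q) (α : ℕ → A)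

theorem bpRun_zero : bpRun R Gs I α 0 = (I, ∅) := rfl

theorem bpRun_fst_succ (n : ℕ) :
    (bpRun R Gs I α (n+1)).1 = {q' | ∃ q ∈ (bpRun R Gs I α n).1, R q (α n) q'} := by
  simp only [bpRun]
  split <;> rfl

theorem bpRun_snd_succ_of_eq {n : ℕ} (h : (bpRun R Gs I α n).2 = ∅) :
    (bpRun R Gs I α (n+1)).2 = {q' | ∃ q ∈ (bpRun R Gs I α n).1, R q (α n) q'} ∩ Gs := by
  simp only [bpRun, h, if_pos]

theorem bpRun_snd_succ_of_ne {n : ℕ} (h : (bpRun R Gs I α n).2 ≠ ∅) :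
    (bpRun R Gs I α (n+1)).2 = {q' | ∃ q ∈ (bpRun R Gs I α n).2, R q (α n) q'} ∩ Gs := by
  simp only [bpRun, h, if_neg, if_false]

theorem bpRun_snd_subset_fst : ∀ n, (bpRun R Gs I α n).2 ⊆ (bpRun R Gs I α n).1 := by
  intro n
  induction n with
  | zero => simp [bpRun_zero]
  | succ n ih =>
    by_cases h : (bpRun R Gs I α n).2 = ∅
    · rw [bpRun_snd_succ_of_eq R Gs I α h, bpRun_fst_succ]
      exact Set.inter_subset_left
    · rw [bpRun_snd_succ_of_ne R Gs I α h, bpRun_fst_succ]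
      intro q' ⟨⟨q, hq, hR⟩, _⟩
      exact ⟨q, ih hq, hR⟩

theorem bpRun_snd_succ_subset_Gs (n : ℕ) : (bpRun R Gs I α (n+1)).2 ⊆ Gs := by
  by_cases h : (bpRun R Gs I α n).2 = ∅
  · rw [bpRun_snd_succ_of_eq R Gs I α h]; exact Set.inter_subset_right
  · rw [bpRun_snd_succ_of_ne R Gs I α h]; exact Set.inter_subset_right

theorem run_mem_fst (ρ : ℕ → Q) (h0 : ρ 0 ∈ I) (hs : ∀ n, R (ρ n) (α n) (ρ (n+1))) :
    ∀ n, ρ n ∈ (bpRun R Gs I α n).1 := by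
  intro n
  induction n with
  | zero => exact h0
  | succ n ih => rw [bpRun_fst_succ]; exact ⟨ρ n, ih, hs n⟩

theorem mem_fst_run (n : ℕ) (q : Q) (h : q ∈ (bpRun R Gs I α n).1) :
    ∃ c : ℕ → Q, c 0 ∈ I ∧ (∀ m, m < n → R (c m) (α m) (c (m+1))) ∧ c n = q := by
  induction n generalizing q with
  | zero => exact ⟨fun _ => q, h, fun m hm => absurd hm (Nat.not_lt_zero m), rfl⟩
  | succ n ih =>
    rw [bpRun_fst_succ] at h
    obtain ⟨p, hp, hR⟩ := h
    obtain ⟨c, hc0, hcs, hcn⟩ := ih p hp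
    refine ⟨Function.update c (n+1) q, ?_, ?_, ?_⟩
    · rwa [Function.update_of_ne (by omega)]
    · intro m hm
      rcases Nat.lt_succ_iff_lt_or_eq.mp hm with hm' | rfl
      · rw [Function.update_of_ne (by omega), Function.update_of_ne (by omega)]
        exact hcs m hm'
      · rw [Function.update_of_ne (by omega), Function.update_self, hcn]
        exact hR
    · rw [Function.update_self]

theorem stays (ρ : ℕ → Q) (hs : ∀ n, R (ρ n) (α n) (ρ (n+1))) (m : ℕ)
    (hG : ∀ s, m ≤ s → ρ s ∈ Gs) (hm : ρ m ∈ (bpRun R Gs I α m).2) :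
    ∀ n, m ≤ n → ρ n ∈ (bpRun R Gs I α n).2 := by
  intro n hn
  induction n, hn using Nat.le_induction with
  | base => exact hm
  | succ n hn ih =>
    have hne : (bpRun R Gs I α n).2 ≠ ∅ := fun h => by simp [h] at ih
    rw [bpRun_snd_succ_of_ne R Gs I α hne]
    exact ⟨⟨ρ n, ih, hs n⟩, hG (n+1) (by omega)⟩

/-- There is a backward chain through the obligation sets from time `s` to time `n`
starting at `q`. -/
def Reach (s n : ℕ) (q : Q) : Prop :=
  ∃ c : ℕ → Q, c s = q ∧ (∀ m, s ≤ m → m < n → R (c m) (α m) (c (m+1))) ∧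
    (∀ m, s ≤ m → m ≤ n → c m ∈ (bpRun R Gs I α m).2)

theorem Reach.mono {s n m : ℕ} {q : Q} (h : Reach R Gs I α s n q) (hmn : m ≤ n) :
    Reach R Gs I α s m q := by
  obtain ⟨c, h1, h2, h3⟩ := h
  exact ⟨c, h1, fun k hk hk' => h2 k hk (by omega), fun k hk hk' => h3 k hk (by omega)⟩

theorem pigeon {A : Q → Prop} {P : Q → ℕ → Prop} [Finite Q]
    (htr : ∀ q m n, m ≤ n → P q n → P q m)
    (hex : ∀ n, ∃ q, A q ∧ P q n) : ∃ q, A q ∧ ∀ n, P q n := by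
  by_contra h
  push_neg at h
  have h' : ∀ q, ∃ n, A q → ¬ P q n := by
    intro q
    by_cases hq : A q
    · obtain ⟨n, hn⟩ := h q hq; exact ⟨n, fun _ => hn⟩
    · exact ⟨0, fun hq' => absurd hq' hq⟩
  choose f hf using h'
  have : Fintype Q := Fintype.ofFinite Q
  obtain ⟨q, hA, hP⟩ := hex (Finset.univ.sup f)
  exact hf q hA (htr q (f q) _ (Finset.le_sup (Finset.mem_univ q)) hP)

theorem reach_exists {t : ℕ} (hne : ∀ s, t ≤ s → (bpRun R Gs I α s).2 ≠ ∅) :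
    ∀ k s, t ≤ s → ∃ q, Reach R Gs I α s (s + k) q := by
  intro k
  induction k with
  | zero =>
    intro s hs
    obtain ⟨q, hq⟩ := Set.nonempty_iff_ne_empty.mpr (hne s hs)
    refine ⟨q, fun _ => q, rfl, fun m hm hm' => absurd hm' (by omega), ?_⟩
    intro m hm hm'
    obtain rfl : m = s := by omega
    exact hq
  | succ k ih =>
    intro s hs
    obtain ⟨q', c, hc1, hc2, hc3⟩ := ih (s+1) (by omega)
    have hq' : q' ∈ (bpRun R Gs I α (s+1)).2 := hc1 ▸ hc3 (s+1) le_rfl (by omega)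
    rw [bpRun_snd_succ_of_ne R Gs I α (hne s hs)] at hq'
    obtain ⟨⟨q, hq, hR⟩, _⟩ := hq'
    refine ⟨q, Function.update c s q, Function.update_self _ _ _, ?_, ?_⟩
    · intro m hm hm'
      rcases Nat.eq_or_lt_of_le hm with rfl | hm''
      · rw [Function.update_self, Function.update_of_ne (by omega), hc1]
        exact hR
      · rw [Function.update_of_ne (by omega), Function.update_of_ne (by omega)]
        exact hc2 m (by omega) (by omega)
    · intro m hm hm'
      rcases Nat.eq_or_lt_of_le hm with rfl | hm''
      · rw [Function.update_self]; exact hq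
      · rw [Function.update_of_ne (by omega)]
        exact hc3 m (by omega) (by omega)

theorem good_exists [Finite Q] {t : ℕ} (hne : ∀ s, t ≤ s → (bpRun R Gs I α s).2 ≠ ∅)
    {s : ℕ} (hs : t ≤ s) : ∃ q, ∀ n, Reach R Gs I α s (s + n) q := by
  obtain ⟨q, -, hq⟩ := pigeon (A := fun _ : Q => True)
    (P := fun q n => Reach R Gs I α s (s + n) q)
    (fun q m n hmn h => Reach.mono R Gs I α h (Nat.add_le_add_left hmn s))
    (fun n => by obtain ⟨q, hq⟩ := reach_exists R Gs I α hne n s hs; exact ⟨q, trivial, hq⟩)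
  exact ⟨q, hq⟩

theorem good_step [Finite Q] {s : ℕ} {q : Q}
    (hq : ∀ n, Reach R Gs I α s (s + n) q) :
    ∃ q', R q (α s) q' ∧ ∀ n, Reach R Gs I α (s+1) (s+1+n) q' := by
  apply pigeon (A := fun q' => R q (α s) q')
    (P := fun q' n => Reach R Gs I α (s+1) (s+1+n) q')
    (fun q m n hmn h => Reach.mono R Gs I α h (Nat.add_le_add_left hmn (s+1)))
  intro n
  obtain ⟨c, hc1, hc2, hc3⟩ := hq (n+1)
  refine ⟨c (s+1), hc1 ▸ hc2 s le_rfl (by omega), c, rfl, ?_, ?_⟩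
  · exact fun m hm hm' => hc2 m (by omega) (by omega)
  · exact fun m hm hm' => hc3 m (by omega) (by omega)

end MH

/-- Miyano–Hayashi breakpoint construction is correct for nondeterministic
co-Büchi automata: `N` accepts `α` (some run of `N` on `α` eventually stays
in `Gs`) iff the deterministic breakpoint run eventually has `O ≠ ∅` forever
(i.e., the breakpoint states with `O = ∅` are visited only finitely often). -/
theorem miyano_hayashi_correct
    {Q A : Type*} [Finite Q] (R : Q → A → Q → Prop)
    (Gs I : Set Q) (α : ℕ → A) :
    (∃ ρ : ℕ → Q, ρ 0 ∈ I ∧ (∀ n, R (ρ n) (α n) (ρ (n + 1))) ∧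
        ∃ t, ∀ s, t ≤ s → ρ s ∈ Gs) ↔
    (∃ t, ∀ s, t ≤ s → (bpRun R Gs I α s).2 ≠ ∅) := by
  constructor
  · rintro ⟨ρ, h0, hs, t, hG⟩
    by_cases hc : ∃ m, t ≤ m ∧ (bpRun R Gs I α m).2 = ∅
    · obtain ⟨m, hm, hO⟩ := hc
      have hmem : ρ (m+1) ∈ (bpRun R Gs I α (m+1)).2 := by
        rw [bpRun_snd_succ_of_eq R Gs I α hO]
        refine ⟨?_, hG (m+1) (by omega)⟩
        rw [← bpRun_fst_succ]
        exact run_mem_fst R Gs I α ρ h0 hs (m+1)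
      refine ⟨m+1, fun s hs' hemp => ?_⟩
      have hmem' := stays R Gs I α ρ hs (m+1) (fun u hu => hG u (by omega)) hmem s hs'
      exact Set.Nonempty.ne_empty ⟨ρ s, hmem'⟩ hemp
    · push_neg at hc
      exact ⟨t, fun s hs' => (hc s hs').ne_empty⟩
  · rintro ⟨t, ht⟩
    have hne : ∀ s, t + 1 ≤ s → (bpRun R Gs I α s).2 ≠ ∅ := fun s hs => ht s (by omega)
    obtain ⟨q₀, hq₀⟩ := good_exists R Gs I α hne (le_refl (t+1))
    have hstep : ∀ s, ∀ q : Q, (∀ n, Reach R Gs I α s (s + n) q) →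
        ∃ q', R q (α s) q' ∧ ∀ n, Reach R Gs I α (s+1) (s+1+n) q' :=
      fun s q h => good_step R Gs I α h
    choose! step hst using hstep
    let f : ∀ k : ℕ, {q : Q // ∀ n, Reach R Gs I α (t + 1 + k) (t + 1 + k + n) q} :=
      fun k => Nat.rec ⟨q₀, hq₀⟩
        (fun k ih => ⟨step (t + 1 + k) ih.1, (hst (t + 1 + k) ih.1 ih.2).2⟩) k
    set σ : ℕ → Q := fun k => (f k).1 with hσ
    have hR : ∀ k, R (σ k) (α (t + 1 + k)) (σ (k+1)) :=
      fun k => (hst (t + 1 + k) (f k).1 (f k).2).1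
    have hO : ∀ k, σ k ∈ (bpRun R Gs I α (t + 1 + k)).2 := by
      intro k
      obtain ⟨c, hc1, -, hc3⟩ := (f k).2 0
      have h := hc3 (t + 1 + k) le_rfl (by omega)
      rw [hc1] at h
      exact h
    have hq₀S : σ 0 ∈ (bpRun R Gs I α (t + 1)).1 := by
      have := hO 0
      exact bpRun_snd_subset_fst R Gs I α (t+1) this
    obtain ⟨c, hc0, hcs, hct⟩ := mem_fst_run R Gs I α (t+1) (σ 0) hq₀S
    refine ⟨fun n => if n < t + 1 then c n else σ (n - (t+1)), ?_, ?_, t + 1, ?_⟩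
    · simpa using hc0
    · intro n
      by_cases h1 : n + 1 < t + 1
      · simp only [if_pos (by omega : n < t + 1), if_pos h1]
        exact hcs n (by omega)
      · by_cases h2 : n < t + 1
        · have hn : n + 1 = t + 1 := by omega
          simp only [if_pos h2, if_neg h1]
          have : n + 1 - (t+1) = 0 := by omega
          rw [this, ← hct, ← hn]
          exact hcs n (by omega)
        · simp only [if_neg h1, if_neg h2]
          have e1 : n + 1 - (t+1) = (n - (t+1)) + 1 := by omega
          have e2 : t + 1 + (n - (t+1)) = n := by omega
          rw [e1]
          have := hR (n - (t+1))
          rwa [e2] at this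
    · intro s hs'
      simp only [if_neg (by omega : ¬ s < t + 1)]
      have := hO (s - (t+1))
      have e : t + 1 + (s - (t+1)) = s := by omega
      rw [e] at this
      obtain ⟨m, rfl⟩ : ∃ m, s = m + 1 := ⟨s - 1, by omega⟩
      exact bpRun_snd_succ_subset_Gs R Gs I α m this
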